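/- arXiv:2507.07007 — 2 statements merged into one kernel-verified Lean document; each statement's English description precedes it below -/
import Mathlib

section
/- Let (m_1,r_1),…,(m_n,r_n) with m_i ∈ ℝ², r_i > 0, satisfy the geometric robustness condition: ∂h_{(m_i,r_i)} ∩ ∂h_{(m_j,r_j)} = ∅ for all i ≠ j, and each ∂h_{(m_i,r_i)} has exactly 0 or exactly 2 elements. Let H_v : S¹ → ℕ be the sum of the signal functions. Then for every x ∈ S¹ the one-sided limits H_v(x⁺) and H_v(x⁻) exist, H_v(x) = max(H_v(x⁺), H_v(x⁻)), and |H_v(x⁺) − H_v(x⁻)| ≤ 1. -/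
noncomputable section

open scoped BigOperators
open Classical

/-- The unit circle `S¹` in the plane (modeled as `ℂ ≅ ℝ²` with the Euclidean norm). -/
def S1 : Set ℂ := {x : ℂ | ‖x‖ = 1}

/-- The signal function `h_{(m,r)}`: indicator of the closed disk of center `m`, radius `r`. -/
def signal (m : ℂ) (r : ℝ) (x : ℂ) : ℕ := if ‖x - m‖ ≤ r then 1 else 0

/-- The boundary trace `∂h_{(m,r)} = {x ∈ S¹ : ‖x − m‖ = r}`. -/
def bTrace (m : ℂ) (r : ℝ) : Set ℂ := {x : ℂ | ‖x‖ = 1 ∧ ‖x - m‖ = r}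

/-- The sum `H_v` of the signal functions of the disk data `v = ((m_i, r_i))_{i<n}`. -/
def Hsum {n : ℕ} (v : Fin n → ℂ × ℝ) (x : ℂ) : ℕ := ∑ i, signal (v i).1 (v i).2 x

/-- Rotation of the plane by angle `t` about the origin. -/
def rot (t : ℝ) (x : ℂ) : ℂ := Complex.exp (t * Complex.I) * x

/-- `H(x⁺) = a`: `H` equals `a` just after `x` (counterclockwise). -/
def rightVal (H : ℂ → ℕ) (x : ℂ) (a : ℕ) : Prop :=
  ∃ δ > (0 : ℝ), ∀ t : ℝ, 0 < t → t < δ → H (rot t x) = a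

/-- `H(x⁻) = b`: `H` equals `b` just before `x`. -/
def leftVal (H : ℂ → ℕ) (x : ℂ) (b : ℕ) : Prop :=
  ∃ δ > (0 : ℝ), ∀ t : ℝ, -δ < t → t < 0 → H (rot t x) = b

/-- `H` is properly upper semicontinuous on `S¹`: at each point both one-sided limits
exist and the value equals their maximum. -/
def ProperlyUSC (H : ℂ → ℕ) : Prop :=
  ∀ x ∈ S1, ∃ a b : ℕ, rightVal H x a ∧ leftVal H x b ∧ H x = max a b

/-- `H* = max_{S¹} H`. -/
def maxOnS1 (H : ℂ → ℕ) : ℕ := sSup (H '' S1)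

/-- `H_* = min_{S¹} H`. -/
def minOnS1 (H : ℂ → ℕ) : ℕ := sInf (H '' S1)

/-- The superlevel set `{x ∈ S¹ : H(x) ≥ k}`. -/
def superlevel (H : ℂ → ℕ) (k : ℕ) : Set ℂ := {x ∈ S1 | k ≤ H x}

/-- Number of connected components of a subset of the plane. -/
def numCC (A : Set ℂ) : ℕ := Nat.card (ConnectedComponents ↥A)

/-- `τ(H) = Σ_{k=H_*+1}^{H*} (c_k(H) − 1)`. -/
def tau (H : ℂ → ℕ) : ℕ :=
  ∑ k ∈ Finset.Icc (minOnS1 H + 1) (maxOnS1 H), (numCC (superlevel H k) - 1)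

/-- `ρ` for the degrees-of-freedom count. -/
def rho (m : ℂ) (r : ℝ) : ℕ :=
  if bTrace m r = ∅ then 3
  else if (bTrace m r).ncard = 1 ∨ (bTrace m r).ncard = 2 then 1
  else 0

/-- `N`-degrees of freedom of a decomposition with `n ≤ N` signals. -/
def DoF (N : ℕ) {n : ℕ} (v : Fin n → ℂ × ℝ) : ℕ :=
  3 * (N - n) + ∑ i, rho (v i).1 (v i).2

/-! Along the circle, `t ↦ ‖rot t x - m‖ ^ 2` has derivative `2 ⟪x - m, I x⟫` at `t = 0`.
Off its boundary trace a signal is locally constant. At a boundary point that derivative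
vanishes only if `m` is a real multiple of `x`; then the two circles are tangent (one common
point) or equal (infinitely many), which the cardinality hypothesis excludes, so the signal
switches between `0` and `1` there while being `1` at `x` itself. The traces are disjoint,
so at most one signal switches at `x`, which gives both the maximum formula and the bound on
the jump. -/

open Filter Topology Complex

section Calculus

variable {f : ℝ → ℝ} {f' a : ℝ}

lemma HasDerivAt.eventually_nhdsGT_lt (hf : HasDerivAt f f' a) (hf' : 0 < f') :
    ∀ᶠ t in 𝓝[>] a, f a < f t := by
  filter_upwards [nhdsGT_le_nhdsNE a
    ((hasDerivAt_iff_tendsto_slope.1 hf).eventually (eventually_gt_nhds hf')),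
    self_mem_nhdsWithin] with t hslope ht
  exact (slope_pos_iff ht).1 hslope

lemma HasDerivAt.eventually_nhdsLT_gt (hf : HasDerivAt f f' a) (hf' : 0 < f') :
    ∀ᶠ t in 𝓝[<] a, f t < f a := by
  filter_upwards [nhdsLT_le_nhdsNE a
    ((hasDerivAt_iff_tendsto_slope.1 hf).eventually (eventually_gt_nhds hf')),
    self_mem_nhdsWithin] with t hslope ht
  exact (slope_pos_iff_gt ht).1 hslope

end Calculus

lemma eq_of_norm_sub_smul_eq {E : Type*} [NormedAddCommGroup E] [InnerProductSpace ℝ E]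
    {x y : E} {u : ℝ} (hx : ‖x‖ = 1) (hy : ‖y‖ = 1) (hu : u ≠ 0)
    (h : ‖y - u • x‖ = ‖x - u • x‖) : y = x := by
  have hsq := congrArg (· ^ 2) h
  simp only [norm_sub_sq_real, inner_smul_right, real_inner_self_eq_norm_sq, hx, hy] at hsq
  have hinner : inner ℝ y x = 1 := mul_left_cancel₀ hu (by linarith)
  exact (inner_eq_one_iff_of_norm_eq_one hy hx).1 hinner

section Sums

variable {ι : Type*} [Fintype ι] {a b : ι → ℕ}

lemma sum_max_eq_max_sum (h : {i | a i ≠ b i}.Subsingleton) :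
    ∑ i, max (a i) (b i) = max (∑ i, a i) (∑ i, b i) := by
  by_cases hex : ∃ i₀, a i₀ ≠ b i₀
  · obtain ⟨i₀, hi₀⟩ := hex
    have heq : ∀ i ∈ Finset.univ.erase i₀, a i = b i := fun i hi =>
      by_contra fun hne => Finset.ne_of_mem_erase hi (h hne hi₀)
    have hmax : ∀ i ∈ Finset.univ.erase i₀, max (a i) (b i) = a i := fun i hi => by
      rw [heq i hi, max_self]
    rw [← Finset.add_sum_erase _ (fun i => max (a i) (b i)) (Finset.mem_univ i₀),
      ← Finset.add_sum_erase _ a (Finset.mem_univ i₀),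
      ← Finset.add_sum_erase _ b (Finset.mem_univ i₀),
      Finset.sum_congr rfl hmax, ← Finset.sum_congr rfl heq]
    exact (max_add_add_right _ _ _).symm
  · simp [not_exists_not.1 hex]

lemma natAbs_sum_sub_sum_le_one (h : {i | a i ≠ b i}.Subsingleton)
    (hab : ∀ i, ((a i : ℤ) - b i).natAbs ≤ 1) :
    (((∑ i, a i : ℕ) : ℤ) - ((∑ i, b i : ℕ) : ℤ)).natAbs ≤ 1 := by
  push_cast
  rw [← Finset.sum_sub_distrib]
  by_cases hex : ∃ i₀, a i₀ ≠ b i₀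
  · obtain ⟨i₀, hi₀⟩ := hex
    rw [Finset.sum_eq_single i₀ (fun i _ hi => sub_eq_zero.2 (by
      exact_mod_cast by_contra fun hne => hi (h hne hi₀))) (by simp)]
    exact hab i₀
  · simp [not_exists_not.1 hex]

end Sums

lemma rightVal_of_eventually {H : ℂ → ℕ} {x : ℂ} {a : ℕ}
    (h : ∀ᶠ t in 𝓝[>] 0, H (rot t x) = a) : rightVal H x a := by
  obtain ⟨δ, hδ, hsub⟩ := (nhdsGT_basis (0 : ℝ)).eventually_iff.1 h
  exact ⟨δ, hδ, fun t h0 hδ => hsub ⟨h0, hδ⟩⟩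

lemma leftVal_of_eventually {H : ℂ → ℕ} {x : ℂ} {b : ℕ}
    (h : ∀ᶠ t in 𝓝[<] 0, H (rot t x) = b) : leftVal H x b := by
  obtain ⟨δ, hδ, hsub⟩ := (nhdsLT_basis (0 : ℝ)).eventually_iff.1 h
  exact ⟨-δ, neg_pos.2 hδ, fun t hδ h0 => hsub ⟨by linarith, h0⟩⟩

lemma rot_zero (x : ℂ) : rot 0 x = x := by simp [rot]

lemma hasDerivAt_rot (t : ℝ) (x : ℂ) : HasDerivAt (rot · x) (I * rot t x) t := by
  simpa [rot, mul_comm, mul_left_comm, mul_assoc] using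
    (((hasDerivAt_id t).ofReal_comp).mul_const I).cexp.mul_const x

lemma signal_of_mem_bTrace {m x : ℂ} {r : ℝ} (hx : x ∈ bTrace m r) : signal m r x = 1 :=
  if_pos hx.2.le

lemma bTrace_zero_one_infinite : (bTrace 0 1).Infinite := by
  have hsphere : bTrace 0 1 = Metric.sphere 0 1 := by ext; simp [bTrace]
  rw [hsphere]
  exact (isPreconnected_sphere (by simp [rank_real_complex]) 0 1).infinite_of_nontrivial
    ⟨1, by simp, -1, by simp, by norm_num⟩

lemma eq_inner_smul_of_inner_sub_I_mul_eq_zero {x m : ℂ} (hx : ‖x‖ = 1)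
    (h : inner ℝ (x - m) (I * x) = 0) : m = inner ℝ x m • x := by
  have hx2 : x.re ^ 2 + x.im ^ 2 = 1 := by
    have := Complex.sq_norm x
    rwa [hx, normSq_apply, one_pow, ← sq, ← sq, eq_comm] at this
  simp only [Complex.inner, mul_re, mul_im, sub_re, sub_im, conj_re, conj_im, I_re, I_im] at h ⊢
  rw [real_smul]
  apply Complex.ext <;> simp only [mul_re, mul_im, ofReal_re, ofReal_im]
  · linear_combination -m.re * hx2 + x.im * h
  · linear_combination -m.im * hx2 - x.re * h

lemma inner_sub_I_mul_ne_zero {m x : ℂ} {r : ℝ} (hmem : x ∈ bTrace m r)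
    (h2 : (bTrace m r).ncard = 2) : inner ℝ (x - m) (I * x) ≠ 0 := by
  intro h0
  obtain ⟨hx, rfl⟩ := hmem
  have hm := eq_inner_smul_of_inner_sub_I_mul_eq_zero hx h0
  set u := inner ℝ x m
  by_cases hu : u = 0
  · rw [hu, zero_smul] at hm
    subst hm
    rw [sub_zero, hx, bTrace_zero_one_infinite.ncard] at h2
    exact absurd h2 (by norm_num)
  · have hsub : bTrace m ‖x - m‖ ⊆ {x} := fun y ⟨hy, hyr⟩ =>
      eq_of_norm_sub_smul_eq hx hy hu (by rwa [hm] at hyr)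
    have := Set.ncard_le_ncard hsub (Set.finite_singleton x)
    rw [Set.ncard_singleton] at this
    omega

lemma exists_signal_rot_germs_of_mem {m x : ℂ} {r : ℝ} (hmem : x ∈ bTrace m r)
    (hc : inner ℝ (x - m) (I * x) ≠ 0) :
    ∃ a b : ℕ, (∀ᶠ t in 𝓝[>] 0, signal m r (rot t x) = a) ∧
      (∀ᶠ t in 𝓝[<] 0, signal m r (rot t x) = b) ∧ a + b = 1 := by
  obtain ⟨-, rfl⟩ := hmem
  set g : ℝ → ℝ := fun t => ‖rot t x - m‖ ^ 2
  have hg : HasDerivAt g (2 * inner ℝ (x - m) (I * x)) 0 := by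
    simpa [rot_zero] using ((hasDerivAt_rot 0 x).sub_const m).norm_sq
  have hsig : ∀ t, signal m ‖x - m‖ (rot t x) = if g t ≤ g 0 then 1 else 0 := fun t => by
    simp only [signal, g, rot_zero, sq_le_sq₀ (norm_nonneg _) (norm_nonneg _)]
  rcases hc.lt_or_gt with hneg | hpos
  · refine ⟨1, 0, ?_, ?_, rfl⟩
    · filter_upwards [hg.neg.eventually_nhdsGT_lt (by linarith)] with t ht
      simp [hsig, (neg_lt_neg_iff.1 ht).le]
    · filter_upwards [hg.neg.eventually_nhdsLT_gt (by linarith)] with t ht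
      simp [hsig, neg_lt_neg_iff.1 ht]
  · refine ⟨0, 1, ?_, ?_, rfl⟩
    · filter_upwards [hg.eventually_nhdsGT_lt (by linarith)] with t ht
      simp [hsig, ht]
    · filter_upwards [hg.eventually_nhdsLT_gt (by linarith)] with t ht
      simp [hsig, ht.le]

lemma eventually_signal_rot_eq {m x : ℂ} {r : ℝ} (hx : ‖x - m‖ ≠ r) :
    ∀ᶠ t in 𝓝 0, signal m r (rot t x) = signal m r x := by
  have hcont : Tendsto (fun t => ‖rot t x - m‖) (𝓝 0) (𝓝 ‖x - m‖) := by
    simpa [rot_zero] using ((hasDerivAt_rot 0 x).continuousAt.sub_const m).norm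
  rcases hx.lt_or_gt with hlt | hgt
  · filter_upwards [hcont.eventually_lt_const hlt] with t ht
    simp [signal, ht.le, hlt.le]
  · filter_upwards [hcont.eventually_const_lt hgt] with t ht
    simp [signal, not_le.2 ht, not_le.2 hgt]

lemma exists_signal_rot_germs {m x : ℂ} {r : ℝ} (hx : ‖x‖ = 1)
    (hcard : x ∈ bTrace m r → (bTrace m r).ncard = 2) :
    ∃ a b : ℕ, (∀ᶠ t in 𝓝[>] 0, signal m r (rot t x) = a) ∧
      (∀ᶠ t in 𝓝[<] 0, signal m r (rot t x) = b) ∧ signal m r x = max a b ∧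
      (a ≠ b → x ∈ bTrace m r) ∧ ((a : ℤ) - b).natAbs ≤ 1 := by
  by_cases hmem : x ∈ bTrace m r
  · obtain ⟨a, b, ha, hb, hab⟩ :=
      exists_signal_rot_germs_of_mem hmem (inner_sub_I_mul_ne_zero hmem (hcard hmem))
    exact ⟨a, b, ha, hb, by rw [signal_of_mem_bTrace hmem]; omega, fun _ => hmem, by omega⟩
  · have h := eventually_signal_rot_eq (m := m) (r := r) fun h => hmem ⟨hx, h⟩
    exact ⟨_, _, h.filter_mono nhdsWithin_le_nhds, h.filter_mono nhdsWithin_le_nhds,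
      (max_self _).symm, fun h => absurd rfl h, by simp⟩

theorem stmt5_general {n : ℕ} (v : Fin n → ℂ × ℝ)
    (hdisj : ∀ i j : Fin n, i ≠ j →
      bTrace (v i).1 (v i).2 ∩ bTrace (v j).1 (v j).2 = ∅)
    (hcard : ∀ i : Fin n,
      bTrace (v i).1 (v i).2 = ∅ ∨ (bTrace (v i).1 (v i).2).ncard = 2) :
    ∀ x ∈ S1, ∃ a b : ℕ, rightVal (Hsum v) x a ∧ leftVal (Hsum v) x b ∧
      Hsum v x = max a b ∧ ((a : ℤ) - (b : ℤ)).natAbs ≤ 1 := by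
  intro x hx
  choose a b hright hleft hmax hbdry hjump using fun i =>
    exists_signal_rot_germs (m := (v i).1) (r := (v i).2) hx
      fun hmem => (hcard i).resolve_left (Set.nonempty_of_mem hmem).ne_empty
  have hsub : {i | a i ≠ b i}.Subsingleton := fun i hi j hj => by
    by_contra hij
    exact (hdisj i j hij).subset ⟨hbdry i hi, hbdry j hj⟩
  refine ⟨∑ i, a i, ∑ i, b i, rightVal_of_eventually ?_, leftVal_of_eventually ?_,
    by simp only [Hsum, hmax, sum_max_eq_max_sum hsub], natAbs_sum_sub_sum_le_one hsub hjump⟩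
  · filter_upwards [eventually_all.2 hright] with t ht
    exact Finset.sum_congr rfl fun i _ => ht i
  · filter_upwards [eventually_all.2 hleft] with t ht
    exact Finset.sum_congr rfl fun i _ => ht i

/-- under the geometric robustness condition, at every `x ∈ S¹` both
one-sided limits of `H_v` exist, `H_v(x) = max(H_v(x⁺), H_v(x⁻))`, and
`|H_v(x⁺) − H_v(x⁻)| ≤ 1`. -/
theorem stmt5 {n : ℕ} (v : Fin n → ℂ × ℝ) (hr : ∀ i, 0 < (v i).2)
    (hdisj : ∀ i j : Fin n, i ≠ j →
      bTrace (v i).1 (v i).2 ∩ bTrace (v j).1 (v j).2 = ∅)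
    (hcard : ∀ i : Fin n,
      bTrace (v i).1 (v i).2 = ∅ ∨ (bTrace (v i).1 (v i).2).ncard = 2) :
    ∀ x ∈ S1, ∃ a b : ℕ, rightVal (Hsum v) x a ∧ leftVal (Hsum v) x b ∧
      Hsum v x = max a b ∧ ((a : ℤ) - (b : ℤ)).natAbs ≤ 1 :=
  stmt5_general v hdisj hcard
end
end

section
/- If f, g : S¹ → ℕ are both properly upper semicontinuous and the set {x ∈ S¹ : f(x) ≠ g(x)} is finite, then f = g. (Thus every equivalence class of functions modulo finite sets contains at most one properly u.s.c. function.) -/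
noncomputable section

open scoped BigOperators
open Classical

/-!
A one-sided limit of `H` at `x` is determined by the values of `H` at `rot t x` for `t` in a
punctured neighbourhood of `0`. Since `t ↦ rot t x` is injective near `0`, only finitely many
such `t` land in the finite set where `f` and `g` differ, so `f` and `g` have the same one-sided
limits at every point; proper upper semicontinuity makes the values the maxima of these limits.
-/

open Filter Set Topology

lemma rot_mem_S1 (t : ℝ) {x : ℂ} (hx : x ∈ S1) : rot t x ∈ S1 := by
  change ‖x‖ = 1 at hx
  change ‖rot t x‖ = 1
  rw [rot, norm_mul, hx, mul_one, Complex.norm_exp_ofReal_mul_I]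

lemma ne_zero_of_mem_S1 {x : ℂ} (hx : x ∈ S1) : x ≠ 0 := by
  rintro rfl
  simp [S1] at hx

lemma rot_injOn {x : ℂ} (hx : x ≠ 0) :
    InjOn (fun t => rot t x) (Ioc (-Real.pi) Real.pi) := by
  intro s hs t ht hst
  refine Circle.exp_injOn_Ioc (by linarith) hs ht (Subtype.ext ?_)
  simpa only [Circle.coe_exp] using mul_right_cancel₀ hx hst

lemma eventually_rot_notMem {x : ℂ} (hx : x ≠ 0) {D : Set ℂ} (hD : D.Finite) :
    ∀ᶠ t in 𝓝[≠] (0 : ℝ), rot t x ∉ D := by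
  have hfin : ((fun t => rot t x) ⁻¹' D ∩ Ioc (-Real.pi) Real.pi).Finite :=
    (hD.subset (image_subset_iff.2 inter_subset_left)).of_finite_image
      ((rot_injOn hx).mono inter_subset_right)
  have hnear : Ioc (-Real.pi) Real.pi ∈ 𝓝[≠] (0 : ℝ) :=
    mem_nhdsWithin_of_mem_nhds (Ioc_mem_nhds (by linarith [Real.pi_pos]) Real.pi_pos)
  filter_upwards [nhdsNE_le_cofinite (0 : ℝ) hfin.compl_mem_cofinite, hnear] with t ht hnear
  exact fun hD => ht ⟨hD, hnear⟩

lemma eventually_eq_of_finite_ne {f g : ℂ → ℕ} (h : {x ∈ S1 | f x ≠ g x}.Finite)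
    {x : ℂ} (hx : x ∈ S1) : ∀ᶠ t in 𝓝[≠] (0 : ℝ), f (rot t x) = g (rot t x) := by
  filter_upwards [eventually_rot_notMem (ne_zero_of_mem_S1 hx) h] with t ht
  by_contra hne
  exact ht ⟨rot_mem_S1 t hx, hne⟩

lemma rightVal.eventually {H : ℂ → ℕ} {x : ℂ} {a : ℕ} (hH : rightVal H x a) :
    ∀ᶠ t in 𝓝[>] (0 : ℝ), H (rot t x) = a := by
  obtain ⟨δ, hδ, hH⟩ := hH
  exact (nhdsGT_basis 0).eventually_iff.2 ⟨δ, hδ, fun t ht => hH t ht.1 ht.2⟩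

lemma leftVal.eventually {H : ℂ → ℕ} {x : ℂ} {b : ℕ} (hH : leftVal H x b) :
    ∀ᶠ t in 𝓝[<] (0 : ℝ), H (rot t x) = b := by
  obtain ⟨δ, hδ, hH⟩ := hH
  exact (nhdsLT_basis 0).eventually_iff.2 ⟨-δ, by linarith, fun t ht => hH t ht.1 ht.2⟩

lemma eq_of_eventually_eq {α β : Type*} {l : Filter α} [l.NeBot] {F G : α → β} {a b : β}
    (hF : ∀ᶠ t in l, F t = a) (hG : ∀ᶠ t in l, G t = b) (hFG : ∀ᶠ t in l, F t = G t) :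
    a = b := by
  obtain ⟨t, hFt, hGt, hFGt⟩ := (hF.and (hG.and hFG)).exists
  rw [← hFt, ← hGt, hFGt]

/-- two properly u.s.c. functions on `S¹` agreeing off a finite set
agree everywhere on `S¹`. -/
theorem stmt6 (f g : ℂ → ℕ) (hf : ProperlyUSC f) (hg : ProperlyUSC g)
    (h : {x ∈ S1 | f x ≠ g x}.Finite) :
    ∀ x ∈ S1, f x = g x := by
  intro x hx
  obtain ⟨a, b, hfa, hfb, hfx⟩ := hf x hx
  obtain ⟨a', b', hga, hgb, hgx⟩ := hg x hx
  have hfg := eventually_eq_of_finite_ne h hx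
  have hright : a = a' :=
    eq_of_eventually_eq hfa.eventually hga.eventually (hfg.filter_mono (nhdsGT_le_nhdsNE 0))
  have hleft : b = b' :=
    eq_of_eventually_eq hfb.eventually hgb.eventually (hfg.filter_mono (nhdsLT_le_nhdsNE 0))
  rw [hfx, hgx, hright, hleft]
end
end
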